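/- Fix a threshold l ∈ (0,1). Let μ, μ' be measures on [0,1] with μ' ⪯_D μ, and let ν' ≤ μ' be a measure satisfying ∫₀¹ x dν'(x) ≥ l·|ν'|. Then there exists a measure ν ≤ μ with |ν| = |ν'|, ∫₀¹ x dν(x) ≥ l·|ν|, and μ' − ν' ⪯_D μ − ν. -/

import Mathlib

open MeasureTheory Set
open scoped ENNReal unitInterval Classical

noncomputable section

namespace Persuasion

/-- Total mass of a measure on the unit interval. -/
def tmass (μ : Measure I) : ℝ := (μ univ).toReal

/-- Integral of the identity. -/
def intg (μ : Measure I) : ℝ := ∫ x, (x : ℝ) ∂μ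

/-- Barycenter. -/
def bary (μ : Measure I) : ℝ := intg μ / tmass μ

/-- Blackwell order: `BLE μ ν` means `μ ⪯_B ν`. -/
def BLE (μ ν : Measure I) : Prop :=
  ∀ f : ℝ → ℝ, ContinuousOn f (Icc (0:ℝ) 1) → ConcaveOn ℝ (Icc (0:ℝ) 1) f →
    (∫ x, f (x : ℝ) ∂ν) / tmass ν ≤ (∫ x, f (x : ℝ) ∂μ) / tmass μ

/-- First order stochastic dominance `λ ⪯_F μ`. -/
def FLE (lam mu : Measure I) : Prop :=
  ∀ x : ℝ, lam {y : I | x ≤ (y : ℝ)} ≤ mu {y : I | x ≤ (y : ℝ)}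

/-- A probability kernel with the martingale (barycenter) property. -/
structure ProbKernel where
  k : I → Measure I
  meas : Measurable k
  prob : ∀ x, IsProbabilityMeasure (k x)
  bary_eq : ∀ x : I, ∫ y, (y : ℝ) ∂(k x) = (x : ℝ)

/-- Pushforward of a measure through a kernel. -/
def push (K : ProbKernel) (μ : Measure I) : Measure I := μ.bind K.k

/-- Blackwell order preserving kernels. -/
def BlackwellPreserving (K : ProbKernel) : Prop :=
  ∀ μ ν : Measure I, IsProbabilityMeasure μ → IsProbabilityMeasure ν →
    bary μ = bary ν → BLE μ ν → BLE (push K μ) (push K ν)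

/-- FOSD kernel. -/
structure FOSDKernel where
  k : I → Measure I
  meas : Measurable k
  prob : ∀ x, IsProbabilityMeasure (k x)
  up : ∀ x : I, k x {y : I | (x : ℝ) ≤ (y : ℝ)} = 1

/-- Domination order `λ ⪯_D μ`. -/
def DomLE (lam mu : Measure I) : Prop :=
  ∃ (φ : FOSDKernel) (ρ : ProbKernel), ((lam.bind φ.k).bind ρ.k) ≤ mu

/-- Interval measure for `μ` with threshold `l`. -/
def IsIntervalMeasure (l : ℝ) (μ ν : Measure I) : Prop :=
  ν ≤ μ ∧ bary ν = l ∧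
    ∃ y₁ y₂ : ℝ, 0 ≤ y₁ ∧ y₁ ≤ y₂ ∧ y₂ ≤ 1 ∧
      ν.restrict {x : I | y₁ < (x : ℝ) ∧ (x : ℝ) < y₂} =
        μ.restrict {x : I | y₁ < (x : ℝ) ∧ (x : ℝ) < y₂} ∧
      ν {x : I | (x : ℝ) < y₁ ∨ y₂ < (x : ℝ)} = 0

/-- Greedy measure predicate. -/
def IsGreedy (l : ℝ) (μ ν : Measure I) : Prop :=
  ν ≤ μ ∧ bary ν = l ∧
    ∃ y : ℝ, 0 ≤ y ∧ y ≤ 1 ∧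
      ν.restrict {x : I | y < (x : ℝ)} = μ.restrict {x : I | y < (x : ℝ)} ∧
      ν {x : I | (x : ℝ) < y} = 0

/-- The greedy measure (zero if none exists). -/
def greedy (l : ℝ) (μ : Measure I) : Measure I :=
  if h : ∃ ν, IsGreedy l μ ν then h.choose else 0

/-- Greedy mass. -/
def gmass (l : ℝ) (μ : Measure I) : ℝ := tmass (greedy l μ)

/-- Sequence of residual measures generated by a policy
(internal period `t : ℕ` corresponds to the paper's period `t+1`). -/
def policySeq (σk : ℕ → ProbKernel) (μ₁ : Measure I) (ν : ℕ → Measure I) : ℕ → Measure I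
  | 0 => μ₁
  | t + 1 => push (σk t) (policySeq σk μ₁ ν t - ν t)

/-- Feasibility of a policy for horizon `T`. -/
def Feasible (T : ℕ∞) (l : ℝ) (σk : ℕ → ProbKernel) (μ₁ : Measure I) (ν : ℕ → Measure I) : Prop :=
  (∀ t : ℕ, (t : ℕ∞) < T →
      ν t ≤ policySeq σk μ₁ ν t ∧ l * tmass (ν t) ≤ intg (ν t)) ∧
  (∀ t : ℕ, ¬ (t : ℕ∞) < T → ν t = 0)

/-- Value of a policy (the weight `w t` is the paper's `w_{t+1}`). -/
def value (T : ℕ∞) (w : ℕ → ℝ) (ν : ℕ → Measure I) : ℝ≥0∞ :=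
  ∑' t : ℕ, if (t : ℕ∞) < T then ENNReal.ofReal (w t) * (ν t univ) else 0

/-- The sender's value: supremum over feasible policies. -/
def senderValue (T : ℕ∞) (l : ℝ) (σk : ℕ → ProbKernel) (μ₁ : Measure I) (w : ℕ → ℝ) : ℝ≥0∞ :=
  ⨆ (ν : ℕ → Measure I) (_ : Feasible T l σk μ₁ ν), value T w ν

/-- Greedy state/action sequence with horizon `T`. -/
def gSeq (T : ℕ∞) (l : ℝ) (σk : ℕ → ProbKernel) (μ₁ : Measure I) : ℕ → Measure I × Measure I
  | 0 => (μ₁, if ((0 : ℕ) : ℕ∞) < T then greedy l μ₁ else 0)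
  | t + 1 =>
      (push (σk t) ((gSeq T l σk μ₁ t).1 - (gSeq T l σk μ₁ t).2),
        if ((t + 1 : ℕ) : ℕ∞) < T then
          greedy l (push (σk t) ((gSeq T l σk μ₁ t).1 - (gSeq T l σk μ₁ t).2)) else 0)

/-- The greedy policy. -/
def greedyPolicy (T : ℕ∞) (l : ℝ) (σk : ℕ → ProbKernel) (μ₁ : Measure I) (t : ℕ) : Measure I :=
  (gSeq T l σk μ₁ t).2

/-- Grids: `Z = ℤ ∩ [a,b]` is captured by order-connectedness. -/
structure Grid where
  Z : Set ℤ
  ordConn : Z.OrdConnected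
  z : ℤ → I
  mono : ∀ i j, i ∈ Z → j ∈ Z → i < j → (z i : ℝ) < (z j : ℝ)

/-- The random-walk kernel on a grid. -/
def IsRWKernel (G : Grid) (K : ProbKernel) : Prop :=
  ∀ j ∈ G.Z,
    ((j - 1 ∈ G.Z → j + 1 ∈ G.Z →
        K.k (G.z j) =
          ENNReal.ofReal (((G.z (j + 1) : ℝ) - (G.z j : ℝ)) /
              ((G.z (j + 1) : ℝ) - (G.z (j - 1) : ℝ))) • Measure.dirac (G.z (j - 1)) +
          ENNReal.ofReal (((G.z j : ℝ) - (G.z (j - 1) : ℝ)) /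
              ((G.z (j + 1) : ℝ) - (G.z (j - 1) : ℝ))) • Measure.dirac (G.z (j + 1)))) ∧
    ((j - 1 ∉ G.Z ∨ j + 1 ∉ G.Z) → K.k (G.z j) = Measure.dirac (G.z j))

/-- `D(Γ)` for threshold `l`. -/
def Dval (G : Grid) (l : ℝ) : ℝ :=
  sSup {d : ℝ | ∃ j : ℤ, j ≤ 0 ∧ j - 1 ∈ G.Z ∧
    d = (l - (G.z (j - 1) : ℝ)) / (l - (G.z j : ℝ))}

/-- Endpoint index of a grid. -/
def IsEndpointIdx (G : Grid) (j : ℤ) : Prop := j ∈ G.Z ∧ (j - 1 ∉ G.Z ∨ j + 1 ∉ G.Z)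

/-- The measure is supported on the grid. -/
def SuppOnGrid (G : Grid) (μ : Measure I) : Prop :=
  μ {x : I | ¬ ∃ j ∈ G.Z, x = G.z j} = 0

/-- `Δ*(Γ)`: supported on even- or on odd-indexed points (endpoints count as both). -/
def MemDeltaStar (G : Grid) (μ : Measure I) : Prop :=
  (μ {x : I | ¬ ∃ j ∈ G.Z, (Even j ∨ IsEndpointIdx G j) ∧ x = G.z j} = 0) ∨
  (μ {x : I | ¬ ∃ j ∈ G.Z, (Odd j ∨ IsEndpointIdx G j) ∧ x = G.z j} = 0)


lemma bind_mono' {ν μ : Measure I} (h : ν ≤ μ) {k : I → Measure I} (hk : Measurable k) :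
    ν.bind k ≤ μ.bind k := by
  refine Measure.le_iff.mpr fun s hs => ?_
  rw [Measure.bind_apply hs hk.aemeasurable, Measure.bind_apply hs hk.aemeasurable]
  exact lintegral_mono' h le_rfl

lemma bind_add' (a b : Measure I) {k : I → Measure I} (hk : Measurable k) :
    (a + b).bind k = a.bind k + b.bind k := by
  ext s hs
  rw [Measure.add_apply, Measure.bind_apply hs hk.aemeasurable, Measure.bind_apply hs hk.aemeasurable,
    Measure.bind_apply hs hk.aemeasurable, lintegral_add_measure]

lemma bind_univ (μ : Measure I) {k : I → Measure I} (hk : Measurable k)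
    (hp : ∀ x, IsProbabilityMeasure (k x)) : (μ.bind k) univ = μ univ := by
  rw [Measure.bind_apply MeasurableSet.univ hk.aemeasurable]
  simp [fun x => (hp x).measure_univ]

lemma integrable_coe (μ : Measure I) [IsFiniteMeasure μ] :
    Integrable (fun x : I => (x : ℝ)) μ := by
  refine (integrable_const (1:ℝ)).mono'
    (continuous_subtype_val.aestronglyMeasurable) ?_
  filter_upwards with x
  rw [Real.norm_eq_abs, abs_of_nonneg x.2.1]
  exact x.2.2

def L (μ : Measure I) : ℝ≥0∞ := ∫⁻ x : I, ENNReal.ofReal (x : ℝ) ∂μ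

lemma intg_eq (μ : Measure I) : intg μ = (L μ).toReal := by
  rw [intg, integral_eq_lintegral_of_nonneg_ae
    (Filter.Eventually.of_forall fun x => x.2.1)
    continuous_subtype_val.aestronglyMeasurable]
  rfl

lemma L_le_univ (μ : Measure I) : L μ ≤ μ univ := by
  calc L μ ≤ ∫⁻ _ : I, 1 ∂μ := lintegral_mono fun x => by
        simpa using ENNReal.ofReal_le_one.mpr x.2.2
    _ = μ univ := by simp

lemma measurable_ofReal_coe : Measurable fun y : I => ENNReal.ofReal (y : ℝ) :=
  ENNReal.measurable_ofReal.comp measurable_subtype_coe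


/-- a dominating measure can mimic any feasible removal while keeping
domination of the residuals. -/
theorem domination_step
    (l : ℝ) (hl : l ∈ Set.Ioo (0:ℝ) 1)
    (μ μ' : Measure I) [IsFiniteMeasure μ] [IsFiniteMeasure μ']
    (hdom : DomLE μ' μ)
    (ν' : Measure I) (hν' : ν' ≤ μ') (hbar : l * tmass ν' ≤ intg ν') :
    ∃ ν : Measure I, ν ≤ μ ∧ tmass ν = tmass ν' ∧ l * tmass ν ≤ intg ν ∧
      DomLE (μ' - ν') (μ - ν) := by
  obtain ⟨φ, ρ, hle⟩ := hdom
  set ν : Measure I := (ν'.bind φ.k).bind ρ.k with hνdef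
  haveI hfν' : IsFiniteMeasure ν' := isFiniteMeasure_of_le μ' hν'
  have hνle : ν ≤ μ := le_trans (bind_mono' (bind_mono' hν' φ.meas) ρ.meas) hle
  haveI hfν : IsFiniteMeasure ν := isFiniteMeasure_of_le μ hνle
  have hmass : ν univ = ν' univ := by
    rw [hνdef, bind_univ _ ρ.meas ρ.prob, bind_univ _ φ.meas φ.prob]
  have htm : tmass ν = tmass ν' := by rw [tmass, tmass, hmass]
  -- L inequalities
  have hLφ : ∀ x : I, ENNReal.ofReal (x:ℝ) ≤ L (φ.k x) := by
    intro x
    haveI := φ.prob x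
    have hms : MeasurableSet {y : I | (x:ℝ) ≤ (y:ℝ)} :=
      measurableSet_le measurable_const measurable_subtype_coe
    have h0 : φ.k x ({y : I | (x:ℝ) ≤ (y:ℝ)}ᶜ) = 0 :=
      (prob_compl_eq_zero_iff hms).mpr (φ.up x)
    have hae : ∀ᵐ (y : I) ∂(φ.k x), (x:ℝ) ≤ (y:ℝ) := by
      refine MeasureTheory.ae_iff.mpr ?_
      simpa [compl_setOf] using h0
    calc ENNReal.ofReal (x:ℝ) = ∫⁻ _ : I, ENNReal.ofReal (x:ℝ) ∂(φ.k x) := by simp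
      _ ≤ L (φ.k x) := lintegral_mono_ae (hae.mono fun y hy => ENNReal.ofReal_le_ofReal hy)
  have hLρ : ∀ x : I, L (ρ.k x) = ENNReal.ofReal (x:ℝ) := by
    intro x
    haveI := ρ.prob x
    rw [L, ← ofReal_integral_eq_lintegral_ofReal (integrable_coe _)
      (Filter.Eventually.of_forall fun y => y.2.1), ρ.bary_eq x]
  have hLbind : ∀ m : Measure I, L (m.bind ρ.k) = L m := by
    intro m
    rw [L, Measure.lintegral_bind ρ.meas.aemeasurable measurable_ofReal_coe.aemeasurable]
    simp_rw [show ∀ a : I, ∫⁻ y : I, ENNReal.ofReal (y:ℝ) ∂(ρ.k a) = ENNReal.ofReal (a:ℝ)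
      from fun a => hLρ a]
    rfl
  have hL : L ν' ≤ L ν := by
    rw [hνdef, hLbind]
    calc L ν' = ∫⁻ a : I, ENNReal.ofReal (a:ℝ) ∂ν' := rfl
      _ ≤ ∫⁻ a : I, L (φ.k a) ∂ν' := lintegral_mono fun a => hLφ a
      _ = L (ν'.bind φ.k) := (Measure.lintegral_bind φ.meas.aemeasurable measurable_ofReal_coe.aemeasurable).symm
  have hintg : intg ν' ≤ intg ν := by
    rw [intg_eq, intg_eq]
    refine ENNReal.toReal_mono ?_ hL
    exact ((L_le_univ ν).trans_lt (measure_lt_top _ _)).ne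
  refine ⟨ν, hνle, htm, ?_, ?_⟩
  · rw [htm]; exact hbar.trans hintg
  · refine ⟨φ, ρ, Measure.le_iff.mpr fun s hs => ?_⟩
    rw [Measure.sub_apply hs hνle]
    refine ENNReal.le_sub_of_add_le_right (measure_ne_top ν s) ?_
    have key : ((μ' - ν').bind φ.k).bind ρ.k + ν = (μ'.bind φ.k).bind ρ.k := by
      rw [hνdef, ← bind_add' _ _ ρ.meas, ← bind_add' _ _ φ.meas,
        Measure.sub_add_cancel_of_le hν']
    calc (((μ' - ν').bind φ.k).bind ρ.k) s + ν s
        = ((((μ' - ν').bind φ.k).bind ρ.k) + ν) s := (Measure.add_apply _ _ _).symm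
      _ = ((μ'.bind φ.k).bind ρ.k) s := by rw [key]
      _ ≤ μ s := hle s


end Persuasion
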